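/- Let n be a positive integer and let x_1, …, x_n be real numbers satisfying x_1 > -x_2 > x_3 > … > (-1)^{n+1} x_n > 0. For 1 ≤ r ≤ k ≤ n define the partial elementary symmetric polynomial s_r^{(k)} = Σ_{1 ≤ i_1 < … < i_r ≤ k} x_{i_1} ⋯ x_{i_r} (the r-th elementary symmetric polynomial of the first k variables x_1, …, x_k). Then for all r, k with 1 ≤ r ≤ k ≤ n: s_r^{(k)} > 0 if r ≡ 1 (mod 4), s_r^{(k)} < 0 if r ≡ 2 (mod 4), s_r^{(k)} < 0 if r ≡ 3 (mod 4), and s_r^{(k)} > 0 if r ≡ 0 (mod 4). -/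
import Mathlib

open Finset

noncomputable def auxS (x : ℕ → ℝ) (r k : ℕ) : ℝ := ∑ t ∈ (Icc 1 k).powersetCard r, ∏ i ∈ t, x i

noncomputable def auxT (x : ℕ → ℝ) (r k : ℕ) : ℝ := (-1)^(r/2) * auxS x r k

lemma negpow_congr {a b : ℕ} (h : a % 2 = b % 2) : ((-1:ℝ))^a = (-1)^b := by
  rw [← Nat.div_add_mod a 2, ← Nat.div_add_mod b 2, pow_add, pow_add, pow_mul, pow_mul]
  simp [h]

lemma auxS_rec' (x : ℕ → ℝ) (r k : ℕ) :
    auxS x (r+1) (k+1) = auxS x (r+1) k + x (k+1) * auxS x r k := by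
  have hins : Icc 1 (k+1) = insert (k+1) (Icc 1 k) := by
    rw [← Finset.insert_Icc_right_eq_Icc_add_one (by omega)]
  have hnot : (k+1) ∉ Icc 1 k := by simp
  rw [auxS, hins, powersetCard_succ_insert hnot, sum_union, auxS, auxS, mul_sum]
  · congr 1
    rw [sum_image]
    · refine sum_congr rfl fun t ht => ?_
      have hts : t ⊆ Icc 1 k := (mem_powersetCard.1 ht).1
      rw [prod_insert (fun h => hnot (hts h))]
    · intro t ht u hu h
      have hts : t ⊆ Icc 1 k := (mem_powersetCard.1 ht).1
      
      have h1 : (k+1) ∉ t := fun h => hnot (hts h)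
      have h2 : (k+1) ∉ u := fun h => hnot ((mem_powersetCard.1 hu).1 h)
      have := congrArg (Finset.erase · (k+1)) h
      simpa [erase_insert h1, erase_insert h2] using this
  · rw [disjoint_left]
    intro t ht ht'
    have h1 : (k+1) ∉ t := fun h => hnot ((mem_powersetCard.1 ht).1 h)
    obtain ⟨u, hu, rfl⟩ := mem_image.1 ht'
    exact h1 (mem_insert_self _ _)

lemma auxT_zero (x : ℕ → ℝ) (k : ℕ) : auxT x 0 k = 1 := by
  simp [auxT, auxS, powersetCard_zero]

lemma auxT_of_gt (x : ℕ → ℝ) {r k : ℕ} (h : k < r) : auxT x r k = 0 := by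
  rw [auxT, auxS, powersetCard_eq_empty.2 (by simpa using h), sum_empty, mul_zero]

lemma auxT_rec (x : ℕ → ℝ) (r k : ℕ) :
    auxT x (r+1) (k+1) = auxT x (r+1) k
      + (-1)^(r+k) * ((-1)^(k+1+1) * x (k+1)) * auxT x r k := by
  unfold auxT
  rw [auxS_rec', mul_add]
  congr 1
  have h : ((-1:ℝ))^((r+1)/2) = (-1)^(r+k) * (-1)^(k+1+1) * (-1)^(r/2) := by
    rw [← pow_add, ← pow_add]
    have hh : (r+1)/2 + r/2 = r := by omega
    exact negpow_congr (by omega)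
  rw [h]; ring

lemma key (n : ℕ) (x : ℕ → ℝ)
    (hpos : ∀ i, 1 ≤ i → i ≤ n → 0 < (-1:ℝ)^(i+1) * x i)
    (hdec : ∀ i, 1 ≤ i → i + 1 ≤ n →
      (-1:ℝ)^(i+2) * x (i+1) < (-1:ℝ)^(i+1) * x i) :
    ∀ k, k ≤ n → ∀ r, 1 ≤ r → r ≤ k →
      0 < auxT x r k ∧ ((r + k) % 2 = 0 → ∀ c, 0 < c → c < (-1:ℝ)^(k+1) * x k →
        c * auxT x (r-1) k < auxT x r k) := by
  intro k
  induction k with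
  | zero => intro _ r hr hrk; omega
  | succ k ih =>
    intro hkn r hr hrk
    obtain ⟨m, rfl⟩ : ∃ m, r = m + 1 := ⟨r - 1, by omega⟩
    have hkn' : k ≤ n := by omega
    have hYpos : 0 < (-1:ℝ)^(k+1+1) * x (k+1) := hpos (k+1) (by omega) hkn
    have hTnn : ∀ j, j ≤ k → 0 ≤ auxT x j k := by
      intro j hj
      match j with
      | 0 => rw [auxT_zero]; norm_num
      | j+1 => exact le_of_lt (ih hkn' (j+1) (by omega) hj).1
    have hrec := auxT_rec x m k
    by_cases hmk : m = k
    · -- r = k+1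
      subst hmk
      have h0 : auxT x (m+1) m = 0 := auxT_of_gt x (by omega)
      have hsg : ((-1:ℝ))^(m+m) = 1 := Even.neg_one_pow ⟨m, rfl⟩
      rw [h0, hsg, zero_add, one_mul] at hrec
      have hTkk : 0 < auxT x m m := by
        rcases Nat.eq_zero_or_pos m with h0' | h0'
        · rw [h0', auxT_zero]; norm_num
        · exact (ih hkn' m h0' le_rfl).1
      constructor
      · rw [hrec]; exact mul_pos hYpos hTkk
      · intro _ c hc hcY
        simp only [Nat.add_sub_cancel]
        have hle : auxT x m (m+1) ≤ auxT x m m := by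
          rcases Nat.eq_zero_or_pos m with h0' | h0'
          · rw [h0', auxT_zero, auxT_zero]
          · obtain ⟨j, rfl⟩ : ∃ j, m = j + 1 := ⟨m - 1, by omega⟩
            have hrec2 := auxT_rec x j (j+1)
            have hsg2 : ((-1:ℝ))^(j+(j+1)) = -1 :=
              Odd.neg_one_pow (Nat.odd_iff.2 (by omega))
            rw [hsg2] at hrec2
            rw [hrec2]
            have : 0 ≤ (-1:ℝ)^(j+1+1+1) * x (j+1+1) * auxT x j (j+1) :=
              mul_nonneg (le_of_lt hYpos) (hTnn j (by omega))
            nlinarith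
        calc c * auxT x m (m+1) ≤ c * auxT x m m :=
              mul_le_mul_of_nonneg_left hle (le_of_lt hc)
          _ < (-1:ℝ)^(m+1+1) * x (m+1) * auxT x m m :=
              mul_lt_mul_of_pos_right hcY hTkk
          _ = auxT x (m+1) (m+1) := hrec.symm
    · -- m + 1 ≤ k
      have hmk' : m + 1 ≤ k := by omega
      have hTr : 0 < auxT x (m+1) k := (ih hkn' (m+1) (by omega) hmk').1
      have hTm : 0 ≤ auxT x m k := hTnn m (by omega)
      by_cases hpar : (m + k) % 2 = 0
      · have hsg : ((-1:ℝ))^(m+k) = 1 := Even.neg_one_pow (Nat.even_iff.2 hpar)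
        rw [hsg, one_mul] at hrec
        constructor
        · rw [hrec]
          have : 0 ≤ (-1:ℝ)^(k+1+1) * x (k+1) * auxT x m k :=
            mul_nonneg (le_of_lt hYpos) hTm
          linarith
        · intro _ c hc hcY
          simp only [Nat.add_sub_cancel]
          have hgoal : c * auxT x m (k+1) < auxT x (m+1) (k+1) := by
            rcases Nat.eq_zero_or_pos m with h0' | h0'
            · subst h0'
              rw [auxT_zero, mul_one, hrec, auxT_zero, mul_one]
              linarith [(ih hkn' 1 le_rfl (by omega)).1]
            · obtain ⟨j, rfl⟩ : ∃ j, m = j + 1 := ⟨m - 1, by omega⟩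
              have hrec2 := auxT_rec x j k
              have hsg2 : ((-1:ℝ))^(j+k) = -1 :=
                Odd.neg_one_pow (Nat.odd_iff.2 (by omega))
              rw [hsg2] at hrec2
              have hle : auxT x (j+1) (k+1) ≤ auxT x (j+1) k := by
                rw [hrec2]
                have : 0 ≤ (-1:ℝ)^(k+1+1) * x (k+1) * auxT x j k :=
                  mul_nonneg (le_of_lt hYpos) (hTnn j (by omega))
                nlinarith
              have hTm' : 0 < auxT x (j+1) k := (ih hkn' (j+1) (by omega) (by omega)).1
              calc c * auxT x (j+1) (k+1) ≤ c * auxT x (j+1) k :=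
                    mul_le_mul_of_nonneg_left hle (le_of_lt hc)
                _ < (-1:ℝ)^(k+1+1) * x (k+1) * auxT x (j+1) k :=
                    mul_lt_mul_of_pos_right hcY hTm'
                _ < auxT x (j+1+1) k + (-1:ℝ)^(k+1+1) * x (k+1) * auxT x (j+1) k := by
                    linarith
                _ = auxT x (j+1+1) (k+1) := hrec.symm
          exact hgoal
      · have hsg : ((-1:ℝ))^(m+k) = -1 := Odd.neg_one_pow (Nat.odd_iff.2 (by omega))
        rw [hsg] at hrec
        have hk1 : 1 ≤ k := by omega
        have hYlt : (-1:ℝ)^(k+1+1) * x (k+1) < (-1:ℝ)^(k+1) * x k := hdec k hk1 hkn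
        have hib := (ih hkn' (m+1) (by omega) hmk').2 (by omega)
          ((-1:ℝ)^(k+1+1) * x (k+1)) hYpos hYlt
        simp only [Nat.add_sub_cancel] at hib
        constructor
        · rw [hrec]; nlinarith
        · intro hcontra; omega

/-- **Inductive claim of Appendix C of the paper.** If
`x₁ > -x₂ > x₃ > ⋯ > (-1)^{n+1} xₙ > 0`, then for all `1 ≤ r ≤ k ≤ n` the partial
elementary symmetric polynomial `s_r^{(k)}` of `x₁, …, x_k` satisfies
`s_r^{(k)} > 0` for `r ≡ 1, 0 (mod 4)` and `s_r^{(k)} < 0` for `r ≡ 2, 3 (mod 4)`. -/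
theorem partial_esymm_sign_of_alternating (n : ℕ) (hn : 1 ≤ n) (x : ℕ → ℝ)
    (hpos : ∀ i, 1 ≤ i → i ≤ n → 0 < (-1 : ℝ) ^ (i + 1) * x i)
    (hdec : ∀ i, 1 ≤ i → i + 1 ≤ n →
      (-1 : ℝ) ^ (i + 2) * x (i + 1) < (-1 : ℝ) ^ (i + 1) * x i)
    (r k : ℕ) (hr1 : 1 ≤ r) (hrk : r ≤ k) (hkn : k ≤ n) :
    (r % 4 = 1 → 0 < ∑ t ∈ (Icc 1 k).powersetCard r, ∏ i ∈ t, x i) ∧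
    (r % 4 = 2 → ∑ t ∈ (Icc 1 k).powersetCard r, ∏ i ∈ t, x i < 0) ∧
    (r % 4 = 3 → ∑ t ∈ (Icc 1 k).powersetCard r, ∏ i ∈ t, x i < 0) ∧
    (r % 4 = 0 → 0 < ∑ t ∈ (Icc 1 k).powersetCard r, ∏ i ∈ t, x i) := by
  have hT : 0 < auxT x r k := (key n x hpos hdec k hkn r hr1 hrk).1
  have hsum : ∑ t ∈ (Icc 1 k).powersetCard r, ∏ i ∈ t, x i = auxS x r k := rfl
  have hST : auxS x r k = (-1:ℝ)^(r/2) * auxT x r k := by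
    rw [auxT, ← mul_assoc, ← pow_add, Even.neg_one_pow ⟨r/2, rfl⟩, one_mul]
  refine ⟨fun h => ?_, fun h => ?_, fun h => ?_, fun h => ?_⟩ <;>
    rw [hsum, hST]
  · rw [Even.neg_one_pow (Nat.even_iff.2 (by omega)), one_mul]; exact hT
  · rw [Odd.neg_one_pow (Nat.odd_iff.2 (by omega))]; linarith
  · rw [Odd.neg_one_pow (Nat.odd_iff.2 (by omega))]; linarith
  · rw [Even.neg_one_pow (Nat.even_iff.2 (by omega)), one_mul]; exact hT
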